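/- Let t : A → A be the automorphism t(x,y) = (y,x) of A = (ℤ/pℤ) × (ℤ/pℤ). For every 2-cocycle μ on A with values in kˣ, the map (x,y) ↦ μ(t(x), t(y)) is a 2-cocycle cohomologous to the pointwise inverse μ⁻¹; i.e., t acts on H²(A, kˣ) by taking inverses. -/

import Mathlib

/-- A 2-cocycle on an abelian group `A` with values in `kˣ` (trivial action). -/
def IsTwoCocycle {A : Type*} [AddCommGroup A] {k : Type*} [Field k]
    (μ : A → A → kˣ) : Prop :=
  ∀ a b c : A, μ a b * μ (a + b) c = μ b c * μ a (b + c)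

/-- A 2-coboundary on an abelian group `A` with values in `kˣ`. -/
def IsCoboundary {A : Type*} [AddCommGroup A] {k : Type*} [Field k]
    (μ : A → A → kˣ) : Prop :=
  ∃ f : A → kˣ, ∀ a b : A, μ a b = f a * f b * (f (a + b))⁻¹

/-- Two 2-cocycles are cohomologous if their pointwise quotient is a coboundary. -/
def Cohomologous {A : Type*} [AddCommGroup A] {k : Type*} [Field k]
    (μ ν : A → A → kˣ) : Prop :=
  IsCoboundary (fun a b => μ a b * (ν a b)⁻¹)

/-!
The commutator pairing `λ(a, b) = μ(a, b) / μ(b, a)` of a cocycle is bimultiplicative and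
alternating, so on `(ℤ/n)²` it is a power of `λ(e₁, e₂)` in the determinant `a₁b₂ - a₂b₁`;
the swap reverses the sign of the determinant, hence `ν(a, b) = μ(ta, tb) μ(a, b)` is a
symmetric cocycle. A symmetric cocycle on `A₁ × A₂` is a coboundary as soon as its restrictions
to both factors are, by the exchange identity
`ν(x, y) ν(z, w) ν(x + y, z + w) = ν(x, z) ν(y, w) ν(x + z, y + w)`. Finally every cocycle on
`ℤ/n` is a coboundary since `kˣ` is divisible: the twisted powers `P m` of the generator satisfy
`P (m + n) = P m * P n`, so with `r ^ n = (P n)⁻¹` the sequence `P m * r ^ m` is `n`-periodic and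
trivialises the cocycle.
-/

open Finset

theorem Units.exists_pow_eq_of_isAlgClosed {k : Type*} [Field k] [IsAlgClosed k] (u : kˣ)
    {n : ℕ} (hn : n ≠ 0) : ∃ r : kˣ, r ^ n = u := by
  obtain ⟨z, hz⟩ := IsAlgClosed.exists_pow_nat_eq (u : k) (Nat.pos_of_ne_zero hn)
  have hz₀ : z ≠ 0 := by
    rintro rfl
    exact u.ne_zero (by rw [← hz, zero_pow hn])
  exact ⟨Units.mk0 z hz₀, Units.ext (by simpa using hz)⟩

section Cocycle

variable {A B : Type*} [AddCommGroup A] [AddCommGroup B] {k : Type*} [Field k]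
  {μ ν : A → A → kˣ}

theorem isCoboundary_iff_exists_mul_eq :
    IsCoboundary μ ↔ ∃ g : A → kˣ, ∀ a b, μ a b * g a * g b = g (a + b) := by
  refine ⟨fun ⟨f, hf⟩ ↦ ⟨fun a ↦ (f a)⁻¹, fun a b ↦ ?_⟩,
    fun ⟨g, hg⟩ ↦ ⟨fun a ↦ (g a)⁻¹, fun a b ↦ ?_⟩⟩
  · rw [hf]
    apply Additive.ofMul.injective
    simp only [ofMul_mul, ofMul_inv]
    abel
  · dsimp only
    rw [← hg, inv_inv]
    apply Additive.ofMul.injective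
    simp only [ofMul_mul, ofMul_inv]
    abel

namespace IsTwoCocycle

theorem apply_zero_right (hμ : IsTwoCocycle μ) (a : A) : μ a 0 = μ 0 0 := by
  simpa using hμ a 0 0

theorem comp (hμ : IsTwoCocycle μ) (f : B →+ A) : IsTwoCocycle fun x y ↦ μ (f x) (f y) := by
  intro a b c
  simpa only [map_add] using hμ (f a) (f b) (f c)

theorem mul (hμ : IsTwoCocycle μ) (hν : IsTwoCocycle ν) :
    IsTwoCocycle fun a b ↦ μ a b * ν a b := by
  intro a b c
  rw [mul_mul_mul_comm, hμ, hν, mul_mul_mul_comm]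

theorem exchange (hμ : IsTwoCocycle μ) (hsymm : ∀ a b, μ a b = μ b a) (x y z w : A) :
    μ x y * μ z w * μ (x + y) (z + w) = μ x z * μ y w * μ (x + z) (y + w) := by
  have hswap : μ x y * μ (x + y) z = μ x z * μ (x + z) y := by
    rw [hμ, hμ x z y, hsymm y z, add_comm z y]
  calc μ x y * μ z w * μ (x + y) (z + w)
      = μ x y * μ (x + y) z * μ (x + y + z) w := by rw [mul_assoc, ← hμ, mul_assoc]
    _ = μ x z * μ (x + z) y * μ (x + z + y) w := by rw [hswap, add_right_comm]
    _ = μ x z * μ y w * μ (x + z) (y + w) := by rw [mul_assoc, hμ, mul_assoc]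

end IsTwoCocycle

end Cocycle

section Cyclic

variable {A : Type*} [AddCommGroup A] {k : Type*} [Field k] {ν : A → A → kˣ}

/-- In the twisted group algebra, where `u a * u b = ν a b • u (a + b)`, one has
`u g ^ i = twistedPow ν g i • u (i • g)`. -/
def twistedPow (ν : A → A → kˣ) (g : A) (i : ℕ) : kˣ :=
  ∏ l ∈ range i, ν (l • g) g

theorem twistedPow_succ (g : A) (i : ℕ) :
    twistedPow ν g (i + 1) = twistedPow ν g i * ν (i • g) g :=
  prod_range_succ _ _

theorem IsTwoCocycle.mul_twistedPow_mul_twistedPow (hν : IsTwoCocycle ν) (g : A) (i j : ℕ) :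
    ν (i • g) (j • g) * (twistedPow ν g i * twistedPow ν g j) =
      ν 0 0 * twistedPow ν g (i + j) := by
  induction j with
  | zero => simp [twistedPow, hν.apply_zero_right]
  | succ j ih =>
    have hstep := hν (i • g) (j • g) g
    rw [← add_nsmul, ← succ_nsmul] at hstep
    calc ν (i • g) ((j + 1) • g) * (twistedPow ν g i * twistedPow ν g (j + 1))
        = ν (j • g) g * ν (i • g) ((j + 1) • g) * (twistedPow ν g i * twistedPow ν g j) := by
          rw [twistedPow_succ]; ac_rfl
      _ = ν (i • g) (j • g) * (twistedPow ν g i * twistedPow ν g j) * ν ((i + j) • g) g := by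
          rw [← hstep]; ac_rfl
      _ = ν 0 0 * twistedPow ν g (i + (j + 1)) := by
          rw [ih, ← add_assoc, twistedPow_succ, mul_assoc]

theorem IsTwoCocycle.isCoboundary_zmod [IsAlgClosed k] {n : ℕ} [NeZero n]
    {ν : ZMod n → ZMod n → kˣ} (hν : IsTwoCocycle ν) : IsCoboundary ν := by
  set P := twistedPow ν 1
  have hmul (i j : ℕ) : ν i j * (P i * P j) = ν 0 0 * P (i + j) := by
    simpa using hν.mul_twistedPow_mul_twistedPow 1 i j
  have hadd_n (m : ℕ) : P (m + n) = P m * P n := by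
    simpa [hν.apply_zero_right] using (hmul m n).symm
  obtain ⟨r, hr⟩ := Units.exists_pow_eq_of_isAlgClosed (P n)⁻¹ (NeZero.ne n)
  have hperiodic (m : ℕ) : P (m + n) * r ^ (m + n) = P m * r ^ m := by
    rw [hadd_n, pow_add, mul_mul_mul_comm, hr, mul_inv_cancel, mul_one]
  have hwrap (a b : ZMod n) :
      P (a.val + b.val) * r ^ (a.val + b.val) = P (a + b).val * r ^ (a + b).val := by
    rcases lt_or_ge (a.val + b.val) n with h | h
    · rw [ZMod.val_add_of_lt h]
    · rw [ZMod.val_add_val_of_le h, hperiodic]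
  refine isCoboundary_iff_exists_mul_eq.2
    ⟨fun a ↦ (ν 0 0)⁻¹ * (P a.val * r ^ a.val), fun a b ↦ ?_⟩
  have hab := hmul a.val b.val
  simp only [ZMod.natCast_zmod_val] at hab
  calc ν a b * ((ν 0 0)⁻¹ * (P a.val * r ^ a.val)) * ((ν 0 0)⁻¹ * (P b.val * r ^ b.val))
      = ν a b * (P a.val * P b.val) * r ^ (a.val + b.val) * (ν 0 0)⁻¹ * (ν 0 0)⁻¹ := by
        rw [pow_add]; ac_rfl
    _ = ν 0 0 * (ν 0 0)⁻¹ * (P (a.val + b.val) * r ^ (a.val + b.val)) * (ν 0 0)⁻¹ := by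
        rw [hab]; ac_rfl
    _ = (ν 0 0)⁻¹ * (P (a + b).val * r ^ (a + b).val) := by
        rw [mul_inv_cancel, one_mul, hwrap, mul_comm]

end Cyclic

section Product

variable {A₁ A₂ : Type*} [AddCommGroup A₁] [AddCommGroup A₂] {k : Type*} [Field k]
  {ν : A₁ × A₂ → A₁ × A₂ → kˣ}

theorem IsTwoCocycle.isCoboundary_of_symm_of_isCoboundary_restrict (hν : IsTwoCocycle ν)
    (hsymm : ∀ a b, ν a b = ν b a) (h₁ : IsCoboundary fun x y : A₁ ↦ ν (x, 0) (y, 0))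
    (h₂ : IsCoboundary fun x y : A₂ ↦ ν (0, x) (0, y)) : IsCoboundary ν := by
  obtain ⟨g₁, hg₁⟩ := isCoboundary_iff_exists_mul_eq.1 h₁
  obtain ⟨g₂, hg₂⟩ := isCoboundary_iff_exists_mul_eq.1 h₂
  refine isCoboundary_iff_exists_mul_eq.2
    ⟨fun a ↦ g₁ a.1 * g₂ a.2 * ν (a.1, 0) (0, a.2), fun a b ↦ ?_⟩
  have hex := hν.exchange hsymm (a.1, 0) (0, a.2) (b.1, 0) (0, b.2)
  simp only [Prod.mk_add_mk, add_zero, zero_add, Prod.mk.eta] at hex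
  calc ν a b * (g₁ a.1 * g₂ a.2 * ν (a.1, 0) (0, a.2)) *
        (g₁ b.1 * g₂ b.2 * ν (b.1, 0) (0, b.2))
      = ν (a.1, 0) (0, a.2) * ν (b.1, 0) (0, b.2) * ν a b * (g₁ a.1 * g₁ b.1) *
          (g₂ a.2 * g₂ b.2) := by
        ac_rfl
    _ = ν (a.1, 0) (b.1, 0) * g₁ a.1 * g₁ b.1 * (ν (0, a.2) (0, b.2) * g₂ a.2 * g₂ b.2) *
          ν (a.1 + b.1, 0) (0, a.2 + b.2) := by
        rw [hex]; ac_rfl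
    _ = g₁ (a + b).1 * g₂ (a + b).2 * ν ((a + b).1, 0) (0, (a + b).2) := by
        rw [hg₁, hg₂, Prod.fst_add, Prod.snd_add]

end Product

section CommPairing

variable {A : Type*} {k : Type*} [Field k] {μ : A → A → kˣ}

def commPairing (μ : A → A → kˣ) (a b : A) : kˣ :=
  μ a b / μ b a

theorem commPairing_swap (a b : A) : commPairing μ b a = (commPairing μ a b)⁻¹ :=
  (inv_div _ _).symm

theorem commPairing_self (a : A) : commPairing μ a a = 1 :=
  div_self' _

namespace IsTwoCocycle

variable [AddCommGroup A]

theorem commPairing_add_left (hμ : IsTwoCocycle μ) (a b c : A) :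
    commPairing μ (a + b) c = commPairing μ a c * commPairing μ b c := by
  have h₁ := congrArg Additive.ofMul (hμ a b c)
  have h₂ := congrArg Additive.ofMul (hμ c a b)
  have h₃ := congrArg Additive.ofMul (hμ a c b)
  rw [add_comm c a] at h₂
  rw [add_comm c b] at h₃
  simp only [ofMul_mul] at h₁ h₂ h₃
  apply Additive.ofMul.injective
  simp only [commPairing, ofMul_mul, ofMul_div]
  linear_combination (norm := abel) h₁ + h₂ - h₃

theorem commPairing_add_right (hμ : IsTwoCocycle μ) (a b c : A) :
    commPairing μ a (b + c) = commPairing μ a b * commPairing μ a c := by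
  rw [commPairing_swap, hμ.commPairing_add_left, mul_inv, ← commPairing_swap,
    ← commPairing_swap]

theorem commPairing_zero_left (hμ : IsTwoCocycle μ) (b : A) : commPairing μ 0 b = 1 := by
  simpa using hμ.commPairing_add_left 0 0 b

theorem commPairing_nsmul_left (hμ : IsTwoCocycle μ) (m : ℕ) (a b : A) :
    commPairing μ (m • a) b = commPairing μ a b ^ m := by
  induction m with
  | zero => simp [hμ.commPairing_zero_left]
  | succ m ih => rw [succ_nsmul, hμ.commPairing_add_left, ih, pow_succ]

theorem commPairing_nsmul_right (hμ : IsTwoCocycle μ) (m : ℕ) (a b : A) :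
    commPairing μ a (m • b) = commPairing μ a b ^ m := by
  rw [commPairing_swap, hμ.commPairing_nsmul_left, commPairing_swap b a, inv_pow]

end IsTwoCocycle

end CommPairing

section ZModProd

variable {k : Type*} [Field k] {n : ℕ} [NeZero n] {μ : ZMod n × ZMod n → ZMod n × ZMod n → kˣ}

theorem zmod_prod_eq_val_nsmul_add_val_nsmul (a : ZMod n × ZMod n) :
    a = a.1.val • ((1 : ZMod n), (0 : ZMod n)) + a.2.val • ((0 : ZMod n), (1 : ZMod n)) := by
  ext <;> simp

namespace IsTwoCocycle

theorem commPairing_eq_pow_mul_pow (hμ : IsTwoCocycle μ) (a b : ZMod n × ZMod n) :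
    commPairing μ a b = commPairing μ (1, 0) (0, 1) ^ (a.1.val * b.2.val) *
      commPairing μ (0, 1) (1, 0) ^ (a.2.val * b.1.val) := by
  conv_lhs =>
    rw [zmod_prod_eq_val_nsmul_add_val_nsmul a, zmod_prod_eq_val_nsmul_add_val_nsmul b]
  simp only [hμ.commPairing_add_left, hμ.commPairing_add_right, hμ.commPairing_nsmul_left,
    hμ.commPairing_nsmul_right, commPairing_self, one_pow, mul_one, one_mul, ← pow_mul]
  rw [Nat.mul_comm b.2.val, Nat.mul_comm b.1.val]

theorem commPairing_prodSwap (hμ : IsTwoCocycle μ) (a b : ZMod n × ZMod n) :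
    commPairing μ b.swap a.swap = commPairing μ a b := by
  rw [hμ.commPairing_eq_pow_mul_pow b.swap, hμ.commPairing_eq_pow_mul_pow a]
  simp only [Prod.fst_swap, Prod.snd_swap, mul_comm]

theorem mul_comp_swap_symm (hμ : IsTwoCocycle μ) (a b : ZMod n × ZMod n) :
    μ a.swap b.swap * μ a b = μ b.swap a.swap * μ b a := by
  have h := hμ.commPairing_prodSwap a b
  rw [commPairing, commPairing, div_eq_div_iff_mul_eq_mul] at h
  rw [h, mul_comm]

theorem isCoboundary_of_symm [IsAlgClosed k] (hμ : IsTwoCocycle μ)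
    (hsymm : ∀ a b, μ a b = μ b a) : IsCoboundary μ :=
  hμ.isCoboundary_of_symm_of_isCoboundary_restrict hsymm
    (hμ.comp (AddMonoidHom.inl _ _)).isCoboundary_zmod
    (hμ.comp (AddMonoidHom.inr _ _)).isCoboundary_zmod

end IsTwoCocycle

end ZModProd

theorem stmt_10_general (p : ℕ) (hp : p.Prime)
    (k : Type*) [Field k] [IsAlgClosed k]
    (t : ZMod p × ZMod p → ZMod p × ZMod p)
    (ht : ∀ a : ZMod p × ZMod p, t a = (a.2, a.1))
    (μ : (ZMod p × ZMod p) → (ZMod p × ZMod p) → kˣ)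
    (hμ : IsTwoCocycle μ) :
    IsTwoCocycle (fun x y => μ (t x) (t y)) ∧
    Cohomologous (fun x y => μ (t x) (t y)) (fun x y => (μ x y)⁻¹) := by
  have : NeZero p := ⟨hp.ne_zero⟩
  obtain rfl : t = Prod.swap := funext ht
  have hswap : IsTwoCocycle fun x y : ZMod p × ZMod p ↦ μ x.swap y.swap :=
    hμ.comp (AddEquiv.prodComm : ZMod p × ZMod p ≃+ _).toAddMonoidHom
  refine ⟨hswap, ?_⟩
  simp only [Cohomologous, inv_inv]
  exact (hswap.mul hμ).isCoboundary_of_symm hμ.mul_comp_swap_symm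

/-- For the swap automorphism `t(x,y) = (y,x)` of `A = (ℤ/pℤ)²`
and any 2-cocycle `μ` on `A` with values in `kˣ`, the pullback
`(x,y) ↦ μ(t x, t y)` is a 2-cocycle cohomologous to the pointwise inverse
`μ⁻¹`; i.e. `t` acts on `H²(A, kˣ)` by taking inverses. -/
theorem stmt_10 (p : ℕ) (hp : p.Prime) (hodd : Odd p)
    (k : Type*) [Field k] [IsAlgClosed k] [CharZero k]
    (t : ZMod p × ZMod p → ZMod p × ZMod p)
    (ht : ∀ a : ZMod p × ZMod p, t a = (a.2, a.1))
    (μ : (ZMod p × ZMod p) → (ZMod p × ZMod p) → kˣ)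
    (hμ : IsTwoCocycle μ) :
    IsTwoCocycle (fun x y => μ (t x) (t y)) ∧
    Cohomologous (fun x y => μ (t x) (t y)) (fun x y => (μ x y)⁻¹) :=
  stmt_10_general p hp k t ht μ hμ
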